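/- arXiv:2104.01248 — 9 statements merged into one kernel-verified Lean document; each statement's English description precedes it below -/
import Mathlib

section
/- (Govil) Let P be a polynomial of degree n all of whose zeros lie in the open unit disk, and let |z_m| = max_k |z_k| be the largest modulus of a zero. Then n/(1 + |z_m|) ≤ min_{z ∈ 𝕋} |P'(z)/P(z)|. -/
open Polynomial

/-! On the unit circle, `z P'(z) / P(z) = ∑ z / (z - a)` over the zeros `a` of `P`, and each term
is `(1 - w)⁻¹` with `w = a / z` in the open unit disk. The real part of `(1 - w)⁻¹` is at least
`1 / (1 + |w|) ≥ 1 / (1 + |z_m|)`, so `|P'(z) / P(z)| ≥ Re (z P'(z) / P(z)) ≥ n / (1 + |z_m|)`. -/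

theorem Complex.one_div_one_add_norm_le_re_inv_one_sub {w : ℂ} (hw : ‖w‖ < 1) :
    1 / (1 + ‖w‖) ≤ (1 - w)⁻¹.re := by
  have hw1 : 1 - w ≠ 0 := fun h => by rw [← sub_eq_zero.1 h] at hw; simp at hw
  have hnormSq : ‖w‖ ^ 2 = w.re ^ 2 + w.im ^ 2 := by
    rw [Complex.sq_norm, Complex.normSq_apply]; ring
  have hre : -‖w‖ ≤ w.re := neg_le_of_abs_le (Complex.abs_re_le_norm w)
  rw [Complex.inv_re, div_le_div_iff₀ (by positivity) (Complex.normSq_pos.2 hw1),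
    Complex.normSq_apply]
  simp only [Complex.sub_re, Complex.one_re, Complex.sub_im, Complex.one_im]
  -- `(1 - Re w)(1 + |w|) - |1 - w|² = (|w| + Re w)(1 - |w|)`
  nlinarith [mul_nonneg (neg_le_iff_add_nonneg.1 hre) (sub_nonneg.2 hw.le)]

theorem Complex.one_div_one_add_norm_le_re_div_sub {z a : ℂ} (hz : ‖z‖ = 1) (ha : ‖a‖ < 1) :
    1 / (1 + ‖a‖) ≤ (z / (z - a)).re := by
  have hz0 : z ≠ 0 := norm_ne_zero_iff.1 (hz ▸ one_ne_zero)
  have hdiv : z / (z - a) = (1 - a / z)⁻¹ := by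
    rw [one_sub_div hz0, inv_div]
  have hnorm : ‖a / z‖ = ‖a‖ := by rw [norm_div, hz, div_one]
  rw [hdiv, ← hnorm]
  exact one_div_one_add_norm_le_re_inv_one_sub (hnorm ▸ ha)

theorem Polynomial.mul_eval_derivative_div_eval (P : ℂ[X]) {z : ℂ} (hz : P.eval z ≠ 0) :
    z * (P.derivative.eval z / P.eval z) = (P.roots.map fun a => z / (z - a)).sum := by
  rw [(IsAlgClosed.splits P).eval_derivative_div_eval_of_ne_zero hz, ← Multiset.sum_map_mul_left]
  simp only [mul_one_div]

theorem Polynomial.card_roots_div_le_norm_eval_derivative_div_eval (P : ℂ[X]) {m : ℝ} {z : ℂ}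
    (hz : ‖z‖ = 1) (hPz : P.eval z ≠ 0) (hroots : ∀ a ∈ P.roots, ‖a‖ < 1 ∧ ‖a‖ ≤ m) :
    (Multiset.card P.roots : ℝ) / (1 + m) ≤ ‖P.derivative.eval z / P.eval z‖ := by
  have hterm : ∀ a ∈ P.roots, 1 / (1 + m) ≤ (z / (z - a)).re := fun a ha =>
    calc 1 / (1 + m) ≤ 1 / (1 + ‖a‖) := by
          gcongr
          exact (hroots a ha).2
      _ ≤ (z / (z - a)).re := Complex.one_div_one_add_norm_le_re_div_sub hz (hroots a ha).1
  calc (Multiset.card P.roots : ℝ) / (1 + m)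
      = Multiset.card (P.roots.map fun a => (z / (z - a)).re) • (1 / (1 + m)) := by
        rw [Multiset.card_map, nsmul_eq_mul, mul_one_div]
    _ ≤ (P.roots.map fun a => (z / (z - a)).re).sum :=
        Multiset.card_nsmul_le_sum <| by simpa only [Multiset.forall_mem_map_iff] using hterm
    _ = (z * (P.derivative.eval z / P.eval z)).re := by
        rw [P.mul_eval_derivative_div_eval hPz]
        exact Multiset.sum_hom' P.roots Complex.reAddGroupHom fun a => z / (z - a)
    _ ≤ ‖z * (P.derivative.eval z / P.eval z)‖ := Complex.re_le_norm _
    _ = ‖P.derivative.eval z / P.eval z‖ := by rw [norm_mul, hz, one_mul]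

theorem stmt4_general (P : Polynomial ℂ)
    (hroots : ∀ w : ℂ, P.eval w = 0 → ‖w‖ < 1)
    (zm : ℂ) (hmax : ∀ w : ℂ, P.eval w = 0 → ‖w‖ ≤ ‖zm‖)
    (z : ℂ) (hz : ‖z‖ = 1) :
    (P.natDegree : ℝ) / (1 + ‖zm‖) ≤ ‖P.derivative.eval z / P.eval z‖ := by
  rw [← IsAlgClosed.card_roots_eq_natDegree]
  have hPz : P.eval z ≠ 0 := fun h => (hroots z h).ne hz
  refine P.card_roots_div_le_norm_eval_derivative_div_eval hz hPz fun a ha => ?_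
  have hPa : P.IsRoot a := (mem_roots'.1 ha).2
  exact ⟨hroots a hPa, hmax a hPa⟩

/-- (Govil) If all zeros of `P` lie in the open unit disk and `zm` is a zero of maximal
modulus, then `n/(1+|zm|) ≤ |P'(z)/P(z)|` on the unit circle. -/
theorem stmt4 (P : Polynomial ℂ) (hP : P ≠ 0) (hn : 1 ≤ P.natDegree)
    (hroots : ∀ w : ℂ, P.eval w = 0 → ‖w‖ < 1)
    (zm : ℂ) (hzm : P.eval zm = 0) (hmax : ∀ w : ℂ, P.eval w = 0 → ‖w‖ ≤ ‖zm‖)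
    (z : ℂ) (hz : ‖z‖ = 1) :
    (P.natDegree : ℝ) / (1 + ‖zm‖) ≤ ‖P.derivative.eval z / P.eval z‖ :=
  stmt4_general P hroots zm hmax z hz
end

section
/- Let P be a polynomial of degree n all of whose zeros z satisfy |z| ≥ 1. Then Re(zP'(z)/P(z)) ≤ n/2 for every z in the closed unit disk at which P(z) ≠ 0. -/
/-!
Over `ℂ` the polynomial splits, so `z P'(z) / P(z) = ∑ z / (z - r)` over the roots `r` of `P`,
counted with multiplicity; there are `n` of them. Each term has real part at most `1 / 2`, since
`|z - r|² - 2 Re (z (z̄ - r̄)) = |r|² - |z|²`, which is nonnegative because `|z| ≤ 1 ≤ |r|`.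
-/

open Polynomial

theorem Complex.re_div_sub_le_half {z r : ℂ} (h : ‖z‖ ≤ ‖r‖) : (z / (z - r)).re ≤ 1 / 2 := by
  rcases eq_or_ne z r with rfl | hne
  · norm_num
  have hpos : 0 < normSq (z - r) := normSq_pos.2 (sub_ne_zero.2 hne)
  have hsq : normSq z ≤ normSq r := by
    simpa only [normSq_eq_norm_sq] using pow_le_pow_left₀ (norm_nonneg z) h 2
  rw [div_re, ← add_div, div_le_iff₀ hpos]
  simp only [normSq_apply, sub_re, sub_im] at hsq ⊢
  linear_combination (1 / 2 : ℝ) * hsq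

theorem Complex.re_multiset_sum_le {s : Multiset ℂ} {c : ℝ} (h : ∀ w ∈ s, w.re ≤ c) :
    s.sum.re ≤ s.card * c := by
  have hre : s.sum.re = (s.map re).sum := map_multiset_sum reAddGroupHom s
  simpa [hre] using Multiset.sum_le_card_nsmul (s.map re) c (by simpa using h)

theorem stmt5_general (P : Polynomial ℂ) (n : ℕ) (hn : P.natDegree = n)
    (hroots : ∀ w : ℂ, P.eval w = 0 → 1 ≤ ‖w‖)
    (z : ℂ) (hz : ‖z‖ ≤ 1) (hPz : P.eval z ≠ 0) :
    (z * P.derivative.eval z / P.eval z).re ≤ (n : ℝ) / 2 := by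
  have hsplit : P.Splits := IsAlgClosed.splits P
  have hlog : z * P.derivative.eval z / P.eval z = (P.roots.map fun r ↦ z / (z - r)).sum := by
    rw [mul_div_assoc, hsplit.eval_derivative_div_eval_of_ne_zero hPz,
      ← Multiset.sum_map_mul_left]
    simp only [mul_one_div]
  have hterm : ∀ w ∈ P.roots.map fun r ↦ z / (z - r), w.re ≤ 1 / 2 := by
    simp only [Multiset.mem_map, forall_exists_index, and_imp, forall_apply_eq_imp_iff₂]
    exact fun r hr ↦ Complex.re_div_sub_le_half (hz.trans (hroots r (isRoot_of_mem_roots hr)))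
  calc (z * P.derivative.eval z / P.eval z).re
      ≤ (P.roots.map fun r ↦ z / (z - r)).card * (1 / 2) :=
        hlog ▸ Complex.re_multiset_sum_le hterm
    _ = n / 2 := by rw [Multiset.card_map, ← hsplit.natDegree_eq_card_roots, hn]; ring

/-- If all zeros of `P` satisfy `|w| ≥ 1`, then `Re(zP'(z)/P(z)) ≤ n/2` on the closed unit
disk, wherever `P(z) ≠ 0`. -/
theorem stmt5 (P : Polynomial ℂ) (n : ℕ) (hn : P.natDegree = n) (hP : P ≠ 0)
    (hroots : ∀ w : ℂ, P.eval w = 0 → 1 ≤ ‖w‖)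
    (z : ℂ) (hz : ‖z‖ ≤ 1) (hPz : P.eval z ≠ 0) :
    (z * P.derivative.eval z / P.eval z).re ≤ (n : ℝ) / 2 :=
  stmt5_general P n hn hroots z hz hPz
end

section
/- Let P be a polynomial of degree n all of whose zeros z satisfy |z| ≥ 2. Then |zP'(z)| ≤ n|P(z)| for all z in the closed unit disk. -/
/-!
Factor `P = c ∏ (X - r)` over its roots. By the product rule, `z P'(z) / P(z) = ∑ z / (z - r)`,
and each summand has modulus at most `1` as soon as `z` is at least as close to `0` as to `r`,
which holds for every root when `‖z‖ ≤ 1 ≤ ‖r‖ - 1`. The argument is run multiplicatively,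
by induction on the roots, so that `P(z) = 0` needs no separate treatment.
-/

open Polynomial

variable {K : Type*} [NormedField K]

theorem norm_mul_eval_derivative_prod_X_sub_C_le (s : Multiset K) (z : K)
    (hs : ∀ r ∈ s, ‖z‖ ≤ ‖z - r‖) :
    ‖z * (derivative (s.map (X - C ·)).prod).eval z‖ ≤
      Multiset.card s * ‖((s.map (X - C ·)).prod).eval z‖ := by
  induction s using Multiset.induction_on with
  | empty => simp
  | cons r t ih =>
    obtain ⟨hr, ht⟩ := Multiset.forall_mem_cons.mp hs
    rw [Multiset.map_cons, Multiset.prod_cons, Multiset.card_cons, Nat.cast_succ]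
    set Q := (t.map (X - C ·)).prod
    have product_rule : z * (derivative ((X - C r) * Q)).eval z
        = z * Q.eval z + (z - r) * (z * (derivative Q).eval z) := by
      simp only [derivative_mul, derivative_sub, derivative_X, derivative_C, sub_zero, one_mul,
        eval_add, eval_mul, eval_sub, eval_X, eval_C]
      ring
    rw [product_rule, eval_mul, eval_sub, eval_X, eval_C, norm_mul]
    calc ‖z * Q.eval z + (z - r) * (z * (derivative Q).eval z)‖
        ≤ ‖z‖ * ‖Q.eval z‖ + ‖z - r‖ * ‖z * (derivative Q).eval z‖ :=
          (norm_add_le _ _).trans_eq (by rw [norm_mul, norm_mul])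
      _ ≤ ‖z - r‖ * ‖Q.eval z‖ + ‖z - r‖ * (t.card * ‖Q.eval z‖) := by
          gcongr
          exact ih ht
      _ = (t.card + 1) * (‖z - r‖ * ‖Q.eval z‖) := by ring

theorem Polynomial.Splits.norm_mul_eval_derivative_le {P : K[X]} (hP : P.Splits) (z : K)
    (hz : ∀ r ∈ P.roots, ‖z‖ ≤ ‖z - r‖) :
    ‖z * P.derivative.eval z‖ ≤ P.natDegree * ‖P.eval z‖ := by
  set Q := (P.roots.map (X - C ·)).prod
  have hfactor : P = C P.leadingCoeff * Q := hP.eq_prod_roots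
  have heval : P.eval z = P.leadingCoeff * Q.eval z := by
    conv_lhs => rw [hfactor, eval_mul, eval_C]
  have hderiv : P.derivative.eval z = P.leadingCoeff * (derivative Q).eval z := by
    conv_lhs => rw [hfactor, derivative_C_mul, eval_mul, eval_C]
  have hQ := norm_mul_eval_derivative_prod_X_sub_C_le P.roots z hz
  rw [← hP.natDegree_eq_card_roots] at hQ
  calc ‖z * P.derivative.eval z‖ = ‖P.leadingCoeff‖ * ‖z * (derivative Q).eval z‖ := by
        rw [hderiv, mul_left_comm, norm_mul]
    _ ≤ ‖P.leadingCoeff‖ * (P.natDegree * ‖Q.eval z‖) := by gcongr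
    _ = P.natDegree * ‖P.eval z‖ := by rw [heval, norm_mul]; ring

theorem stmt8_general (P : Polynomial ℂ) (n : ℕ) (hn : P.natDegree = n)
    (hroots : ∀ w : ℂ, P.eval w = 0 → 2 ≤ ‖w‖)
    (z : ℂ) (hz : ‖z‖ ≤ 1) :
    ‖z * P.derivative.eval z‖ ≤ n * ‖P.eval z‖ := by
  subst hn
  refine (IsAlgClosed.splits P).norm_mul_eval_derivative_le z fun r hr => ?_
  have hr2 : 2 ≤ ‖r‖ := hroots r (isRoot_of_mem_roots hr)
  have hsub : ‖r‖ - ‖z‖ ≤ ‖z - r‖ := by simpa only [norm_sub_rev] using norm_sub_norm_le r z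
  linarith

/-- Pointwise Bernstein inequality: if all zeros of `P` satisfy `|w| ≥ 2`, then
`|zP'(z)| ≤ n|P(z)|` on the closed unit disk. -/
theorem stmt8 (P : Polynomial ℂ) (n : ℕ) (hn : P.natDegree = n) (hP : P ≠ 0)
    (hroots : ∀ w : ℂ, P.eval w = 0 → 2 ≤ ‖w‖)
    (z : ℂ) (hz : ‖z‖ ≤ 1) :
    ‖z * P.derivative.eval z‖ ≤ n * ‖P.eval z‖ :=
  stmt8_general P n hn hroots z hz
end

section
/- Let P be a polynomial of degree n all of whose zeros z satisfy |z| ≥ 2. Then |zP'(z)| ≤ min(|nP(z) - zP'(z)|, n|P(z)|) for all z in the closed unit disk. -/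
/-!
On the closed unit disk `P` has no zeros, and `z P'(z) = P(z) · ∑ z / (z - r)` over the zeros `r`.
Since `|z| ≤ 1` and `|r| ≥ 2`, each term `w = z / (z - r)` satisfies `|w| ≤ 1`, and also
`|w| ≤ |1 - w| = |r / (r - z)|`, i.e. `Re w ≤ 1/2`. Summing, `S = ∑ w` has `|S| ≤ n` and
`Re S ≤ n/2`, and the latter says `|S| ≤ |n - S|`.
-/

open Polynomial

namespace Complex

theorem norm_le_norm_ofReal_sub_of_two_mul_re_le {a : ℝ} (ha : 0 ≤ a) {w : ℂ}
    (h : 2 * w.re ≤ a) : ‖w‖ ≤ ‖(a : ℂ) - w‖ := by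
  rw [← sq_le_sq₀ (norm_nonneg _) (norm_nonneg _), ← normSq_eq_norm_sq, ← normSq_eq_norm_sq]
  simp only [normSq_apply, sub_re, sub_im, ofReal_re, ofReal_im]
  nlinarith

theorem two_mul_re_le_of_norm_le_norm_ofReal_sub {a : ℝ} (ha : 0 < a) {w : ℂ}
    (h : ‖w‖ ≤ ‖(a : ℂ) - w‖) : 2 * w.re ≤ a := by
  rw [← sq_le_sq₀ (norm_nonneg _) (norm_nonneg _), ← normSq_eq_norm_sq, ← normSq_eq_norm_sq]
    at h
  simp only [normSq_apply, sub_re, sub_im, ofReal_re, ofReal_im] at h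
  nlinarith

theorem two_mul_re_div_sub_le_one {z r : ℂ} (h : ‖z‖ ≤ ‖r‖) : 2 * (z / (z - r)).re ≤ 1 := by
  rcases eq_or_ne z r with rfl | hzr
  · simp
  have hone_sub : 1 - z / (z - r) = r / (r - z) := by
    field_simp [sub_ne_zero.2 hzr, sub_ne_zero.2 hzr.symm]
    ring
  apply two_mul_re_le_of_norm_le_norm_ofReal_sub one_pos
  rw [ofReal_one, hone_sub, norm_div, norm_div, norm_sub_rev r z]
  gcongr

theorem norm_div_sub_le_one {z r : ℂ} (h : 2 * ‖z‖ ≤ ‖r‖) : ‖z / (z - r)‖ ≤ 1 := by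
  rw [norm_div]
  refine div_le_one_of_le₀ ?_ (norm_nonneg _)
  linarith [norm_sub_norm_le r z, norm_sub_rev r z]

theorem two_mul_re_multiset_sum_le_card {s : Multiset ℂ} (h : ∀ w ∈ s, 2 * w.re ≤ 1) :
    2 * s.sum.re ≤ Multiset.card s := by
  have hre : s.sum.re = (s.map re).sum := map_multiset_sum reAddGroupHom s
  have hle := Multiset.sum_le_card_nsmul (s.map re) (1 / 2) <| by
    simpa using fun w hw => by linarith [h w hw]
  rw [hre]
  simp only [Multiset.card_map, nsmul_eq_mul] at hle
  linarith

end Complex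

theorem norm_multiset_sum_le_card {E : Type*} [SeminormedAddCommGroup E] {s : Multiset E}
    (h : ∀ x ∈ s, ‖x‖ ≤ 1) : ‖s.sum‖ ≤ Multiset.card s :=
  (norm_multiset_sum_le s).trans <| by
    simpa using Multiset.sum_le_card_nsmul (s.map norm) 1 (by simpa using h)

theorem Polynomial.Splits.mul_eval_derivative_eq_eval_mul_sum {K : Type*} [Field K] {f : K[X]}
    (hf : f.Splits) {x : K} (hx : f.eval x ≠ 0) :
    x * f.derivative.eval x = f.eval x * (f.roots.map fun r => x / (x - r)).sum := by
  rw [hf.eval_derivative_eq_eval_mul_sum hx, mul_left_comm, ← Multiset.sum_map_mul_left]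
  simp only [mul_one_div]

theorem stmt9_general (P : Polynomial ℂ) (n : ℕ) (hn : P.natDegree = n)
    (hroots : ∀ w : ℂ, P.eval w = 0 → 2 ≤ ‖w‖)
    (z : ℂ) (hz : ‖z‖ ≤ 1) :
    ‖z * P.derivative.eval z‖
      ≤ min ‖(n : ℂ) * P.eval z - z * P.derivative.eval z‖ (n * ‖P.eval z‖) := by
  have hPz : P.eval z ≠ 0 := fun h => by linarith [hroots z h]
  have hroot_norm : ∀ r ∈ P.roots, 2 ≤ ‖r‖ := fun r hr => hroots r (mem_roots'.1 hr).2
  set s := P.roots.map fun r => z / (z - r)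
  have hcard : Multiset.card s = n := by
    rw [Multiset.card_map, IsAlgClosed.card_roots_eq_natDegree, hn]
  have hs_norm : ‖s.sum‖ ≤ n := hcard ▸ norm_multiset_sum_le_card <|
    Multiset.forall_mem_map_iff.2 fun r hr =>
      Complex.norm_div_sub_le_one (by linarith [hroot_norm r hr])
  have hs_re : 2 * s.sum.re ≤ n := hcard ▸ Complex.two_mul_re_multiset_sum_le_card <|
    Multiset.forall_mem_map_iff.2 fun r hr =>
      Complex.two_mul_re_div_sub_le_one (by linarith [hroot_norm r hr])
  have hs_le : ‖s.sum‖ ≤ ‖(n : ℂ) - s.sum‖ := by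
    simpa using Complex.norm_le_norm_ofReal_sub_of_two_mul_re_le (Nat.cast_nonneg n) hs_re
  rw [(IsAlgClosed.splits P).mul_eval_derivative_eq_eval_mul_sum hPz, mul_comm (n : ℂ),
    ← mul_sub, mul_comm (n : ℝ), norm_mul, norm_mul]
  exact le_min (by gcongr) (by gcongr)

/-- If all zeros of `P` satisfy `|w| ≥ 2`, then
`|zP'(z)| ≤ min(|nP(z) - zP'(z)|, n|P(z)|)` on the closed unit disk. -/
theorem stmt9 (P : Polynomial ℂ) (n : ℕ) (hn : P.natDegree = n) (hP : P ≠ 0)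
    (hroots : ∀ w : ℂ, P.eval w = 0 → 2 ≤ ‖w‖)
    (z : ℂ) (hz : ‖z‖ ≤ 1) :
    ‖z * P.derivative.eval z‖
      ≤ min ‖(n : ℂ) * P.eval z - z * P.derivative.eval z‖ (n * ‖P.eval z‖) :=
  stmt9_general P n hn hroots z hz
end

section
/- Let P(z) = ∑_{j=0}^n a_j z^j with n ≥ 1 and a_n ≠ 0. Then for all z ≠ 0 and all w ∈ ℂ with w ≠ z, z(P(z) - P(w))/(z - w) = ∑_{k=0}^{n-1} (P(z) - ∑_{j=0}^k a_j z^j)(w/z)^k. -/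
/-! With `w = u z` one has `P z - P w = ∑ a_j z^j (1 - u^j)`. Expanding each `1 - u^j` as
`(1 - u)(1 + u + ⋯ + u^(j-1))` and exchanging the two sums (summation by parts) collects the
coefficient of `u^k` into the tail `∑_{j > k} a_j z^j` of `P z`. -/

open Finset

theorem one_sub_mul_sum_tail_mul_pow {R : Type*} [CommRing R] (b : ℕ → R) (u : R) (n : ℕ) :
    (1 - u) * ∑ k ∈ range n, (∑ j ∈ range (n + 1), b j - ∑ j ∈ range (k + 1), b j) * u ^ k
      = ∑ j ∈ range (n + 1), b j * (1 - u ^ j) := by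
  have tail : ∀ k ∈ range n,
      (∑ j ∈ range (n + 1), b j - ∑ j ∈ range (k + 1), b j) * u ^ k
        = ∑ j ∈ Ico (k + 1) (n + 1), b j * u ^ k := by
    intro k hk
    rw [← sum_Ico_eq_sub _ (by simp at hk; omega), sum_mul]
  calc (1 - u) * ∑ k ∈ range n, (∑ j ∈ range (n + 1), b j - ∑ j ∈ range (k + 1), b j) * u ^ k
      = (1 - u) * ∑ k ∈ range (n + 1), ∑ j ∈ Ico (k + 1) (n + 1), b j * u ^ k := by
        rw [sum_congr rfl tail, sum_range_succ, Ico_self, sum_empty, add_zero]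
    _ = (1 - u) * ∑ j ∈ range (n + 1), b j * ∑ k ∈ range j, u ^ k := by
        simp only [← Nat.Ico_zero_eq_range, sum_Ico_Ico_comm', mul_sum]
    _ = ∑ j ∈ range (n + 1), b j * (1 - u ^ j) := by
        rw [mul_sum]
        refine sum_congr rfl fun j _ => ?_
        linear_combination b j * mul_neg_geom_sum u j

theorem stmt12_general (n : ℕ) (a : ℕ → ℂ)
    (P : ℂ → ℂ) (hP : ∀ z, P z = ∑ j ∈ Finset.range (n + 1), a j * z ^ j)
    (z w : ℂ) (hz : z ≠ 0) (hw : w ≠ z) :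
    z * (P z - P w) / (z - w)
      = ∑ k ∈ Finset.range n,
          (P z - ∑ j ∈ Finset.range (k + 1), a j * z ^ j) * (w / z) ^ k := by
  obtain ⟨u, rfl⟩ : ∃ u, w = u * z := ⟨w / z, (div_mul_cancel₀ w hz).symm⟩
  have hzu : z - u * z ≠ 0 := sub_ne_zero.mpr hw.symm
  have hdiff : P z - P (u * z) = ∑ j ∈ range (n + 1), a j * z ^ j * (1 - u ^ j) := by
    rw [hP, hP, ← sum_sub_distrib]
    exact sum_congr rfl fun j _ => by ring
  rw [hdiff, ← one_sub_mul_sum_tail_mul_pow, ← hP z, mul_div_cancel_right₀ _ hz,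
    div_eq_iff hzu]
  ring

/-- The summation-by-parts identity of Lemma 2.2. -/
theorem stmt12 (n : ℕ) (hn : 1 ≤ n) (a : ℕ → ℂ) (han : a n ≠ 0)
    (P : ℂ → ℂ) (hP : ∀ z, P z = ∑ j ∈ Finset.range (n + 1), a j * z ^ j)
    (z w : ℂ) (hz : z ≠ 0) (hw : w ≠ z) :
    z * (P z - P w) / (z - w)
      = ∑ k ∈ Finset.range n,
          (P z - ∑ j ∈ Finset.range (k + 1), a j * z ^ j) * (w / z) ^ k :=
  stmt12_general n a P hP z w hz hw
end

section
/- Let P(z) = ∑_{j=0}^n a_j z^j with n ≥ 1 and a_n ≠ 0. Then for all z ≠ 0 and w ∈ ℂ (with w ≠ z), |z(P(z) - P(w))/(z - w)| ≤ A(z,w) · max_{0 ≤ k ≤ n-1} |P(z) - ∑_{j=0}^k a_j z^j|, where A(z,w) = (|z|^n - |w|^n)/(|z|^{n-1}(|z| - |w|)) if |z| ≠ |w| and A(z,w) = n if |z| = |w|. -/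
/-!
Writing `x = w / z`, the divided difference `z (P z - P w) / (z - w)` equals
`∑_{k<n} x^k T_k`, where `T_k = P z - ∑_{j ≤ k} a_j z^j` is a tail of `P z`: each monomial
contributes `z (z^j - w^j) / (z - w) = z^j ∑_{k<j} x^k`, and exchanging the two sums collects the
tails. The triangle inequality bounds this by `(∑_{k<n} |x|^k) · max_k |T_k|`, and
`∑_{k<n} |x|^k` is exactly the factor `A(z,w)`.
-/

open Finset

theorem sum_pow_mul_sub_partial_sum {R : Type*} [CommRing R] (x : R) (b : ℕ → R) (n : ℕ) :
    ∑ k ∈ range n, x ^ k * (∑ j ∈ range (n + 1), b j - ∑ j ∈ range (k + 1), b j)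
      = ∑ j ∈ range (n + 1), b j * ∑ k ∈ range j, x ^ k := by
  induction n with
  | zero => simp
  | succ n ih =>
    calc ∑ k ∈ range (n + 1), x ^ k * (∑ j ∈ range (n + 2), b j - ∑ j ∈ range (k + 1), b j)
        = ∑ k ∈ range (n + 1),
            (x ^ k * (∑ j ∈ range (n + 1), b j - ∑ j ∈ range (k + 1), b j) + b (n + 1) * x ^ k) :=
          sum_congr rfl fun k _ => by rw [sum_range_succ b (n + 1)]; ring
      _ = ∑ k ∈ range n, x ^ k * (∑ j ∈ range (n + 1), b j - ∑ j ∈ range (k + 1), b j)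
            + b (n + 1) * ∑ k ∈ range (n + 1), x ^ k := by
          rw [sum_add_distrib, sum_range_succ _ n, sub_self, mul_zero, add_zero, mul_sum]
      _ = ∑ j ∈ range (n + 2), b j * ∑ k ∈ range j, x ^ k := by
          rw [ih, ← sum_range_succ (fun j => b j * ∑ k ∈ range j, x ^ k) (n + 1)]

section Field

variable {K : Type*} [Field K]

theorem mul_sub_pow_eq_sub_mul_geom_sum {z : K} (hz : z ≠ 0) (w : K) (j : ℕ) :
    z * (z ^ j - w ^ j) = (z - w) * (z ^ j * ∑ k ∈ range j, (w / z) ^ k) := by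
  obtain ⟨x, rfl⟩ : ∃ x, w = x * z := ⟨w / z, (div_mul_cancel₀ w hz).symm⟩
  rw [mul_div_cancel_right₀ x hz]
  linear_combination (-z ^ (j + 1)) * geom_sum_mul_neg x j

theorem mul_sub_sum_eq_sub_mul_sum_tail (a : ℕ → K) (n : ℕ) {z : K} (hz : z ≠ 0) (w : K) :
    z * (∑ j ∈ range (n + 1), a j * z ^ j - ∑ j ∈ range (n + 1), a j * w ^ j)
      = (z - w) * ∑ k ∈ range n, (w / z) ^ k *
          (∑ j ∈ range (n + 1), a j * z ^ j - ∑ j ∈ range (k + 1), a j * z ^ j) := by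
  rw [sum_pow_mul_sub_partial_sum, ← sum_sub_distrib, mul_sum, mul_sum]
  refine sum_congr rfl fun j _ => ?_
  linear_combination a j * mul_sub_pow_eq_sub_mul_geom_sum hz w j

theorem ite_div_eq_geom_sum [DecidableEq K] {s : K} (hs : s ≠ 0) (t : K) (n : ℕ) :
    (if s ≠ t then (s ^ n - t ^ n) / (s ^ (n - 1) * (s - t)) else (n : K))
      = ∑ k ∈ range n, (t / s) ^ k := by
  split_ifs with hst
  · obtain ⟨x, rfl⟩ : ∃ x, t = x * s := ⟨t / s, (div_mul_cancel₀ t hs).symm⟩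
    rw [mul_div_cancel_right₀ x hs]
    rcases n with _ | m
    · simp
    rw [div_eq_iff (mul_ne_zero (pow_ne_zero _ hs) (sub_ne_zero.mpr hst)), Nat.add_sub_cancel]
    linear_combination (-s ^ (m + 1)) * geom_sum_mul_neg x (m + 1)
  · rw [not_not.mp hst, div_self (not_not.mp hst ▸ hs)]
    simp

end Field

theorem norm_sum_pow_mul_le {R : Type*} [SeminormedRing R] [NormOneClass R] (x : R)
    (t : ℕ → R) {n : ℕ} {M : ℝ} (ht : ∀ k < n, ‖t k‖ ≤ M) :
    ‖∑ k ∈ range n, x ^ k * t k‖ ≤ (∑ k ∈ range n, ‖x‖ ^ k) * M := by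
  rw [sum_mul]
  refine (norm_sum_le _ _).trans (sum_le_sum fun k hk => ?_)
  calc ‖x ^ k * t k‖ ≤ ‖x‖ ^ k * ‖t k‖ :=
        (norm_mul_le _ _).trans (mul_le_mul_of_nonneg_right (norm_pow_le _ k) (norm_nonneg _))
    _ ≤ ‖x‖ ^ k * M := mul_le_mul_of_nonneg_left (ht k (mem_range.mp hk)) (by positivity)

theorem stmt13_general (n : ℕ) (a : ℕ → ℂ)
    (P : ℂ → ℂ) (hP : ∀ z, P z = ∑ j ∈ Finset.range (n + 1), a j * z ^ j)
    (z w : ℂ) (hz : z ≠ 0) (hw : w ≠ z) :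
    ‖z * (P z - P w) / (z - w)‖
      ≤ (if ‖z‖ ≠ ‖w‖ then (‖z‖ ^ n - ‖w‖ ^ n) / (‖z‖ ^ (n - 1) * (‖z‖ - ‖w‖))
          else (n : ℝ)) *
        ⨆ k : Fin n, ‖P z - ∑ j ∈ Finset.range (k.1 + 1), a j * z ^ j‖ := by
  have hdiv : z * (P z - P w) / (z - w)
      = ∑ k ∈ range n, (w / z) ^ k * (P z - ∑ j ∈ range (k + 1), a j * z ^ j) := by
    rw [div_eq_iff (sub_ne_zero.mpr hw.symm), hP z, hP w, mul_sub_sum_eq_sub_mul_sum_tail a n hz]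
    ring
  have htail : ∀ k < n, ‖P z - ∑ j ∈ range (k + 1), a j * z ^ j‖
      ≤ ⨆ k : Fin n, ‖P z - ∑ j ∈ Finset.range (k.1 + 1), a j * z ^ j‖ := fun k hk =>
    le_ciSup (f := fun k : Fin n => ‖P z - ∑ j ∈ range (k.1 + 1), a j * z ^ j‖)
      (Set.finite_range _).bddAbove ⟨k, hk⟩
  rw [hdiv, ite_div_eq_geom_sum (norm_ne_zero_iff.mpr hz)]
  simpa only [norm_div] using norm_sum_pow_mul_le (w / z) _ htail

/-- Lemma 2.2: the divided-difference estimate with the sharp factor `A(z,w)`. -/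
theorem stmt13 (n : ℕ) (hn : 1 ≤ n) (a : ℕ → ℂ) (han : a n ≠ 0)
    (P : ℂ → ℂ) (hP : ∀ z, P z = ∑ j ∈ Finset.range (n + 1), a j * z ^ j)
    (z w : ℂ) (hz : z ≠ 0) (hw : w ≠ z) :
    ‖z * (P z - P w) / (z - w)‖
      ≤ (if ‖z‖ ≠ ‖w‖ then (‖z‖ ^ n - ‖w‖ ^ n) / (‖z‖ ^ (n - 1) * (‖z‖ - ‖w‖))
          else (n : ℝ)) *
        ⨆ k : Fin n, ‖P z - ∑ j ∈ Finset.range (k.1 + 1), a j * z ^ j‖ :=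
  stmt13_general n a P hP z w hz hw
end

section
/- Let P(z) = ∑_{ν=0}^n a_ν z^{k_ν} with 0 ≤ k_0 < k_1 < ... < k_n integers and all a_ν ∈ ℂ \ {0}. Suppose for each ν = 0,...,n, min over t in the closed unit disk of Re ∑_{j=0}^{n-ν} (a_{j+ν}/a_ν) t^{k_{j+ν} - k_ν} is ≥ 1/2. Then for all z in the closed unit disk, |P(z)| ≥ |ρ_{k_0}(P)(z)| ≥ ... ≥ |ρ_{k_n}(P)(z)| = |a_n z^{k_n}|, where ρ_k(P)(z) denotes the tail ∑ over indices k_ν ≥ k of a_ν z^{k_ν}. -/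
/-!
Write the tail `S_ν(z) = ∑_{μ=ν}^n a_μ z^{k_μ}` as `a_ν z^{k_ν} Q_ν(z)`, where `Q_ν` is the
normalised sum of condition (1.12). Dropping the leading term gives
`S_{ν+1}(z) = a_ν z^{k_ν} (Q_ν(z) - 1)`, and `|Q - 1| ≤ |Q|` holds exactly when `Re Q ≥ 1/2`.
-/

open Finset

theorem Complex.norm_sub_one_le_norm_of_half_le_re {w : ℂ} (h : 1 / 2 ≤ w.re) :
    ‖w - 1‖ ≤ ‖w‖ := by
  rw [← sq_le_sq₀ (norm_nonneg _) (norm_nonneg _), ← Complex.normSq_eq_norm_sq,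
    ← Complex.normSq_eq_norm_sq, Complex.normSq_sub]
  simp only [map_one, mul_one]
  linarith

/-- Since `b / 0 = 0`, condition (1.12) by itself forces `a_ν ≠ 0`. -/
theorem ne_zero_of_half_le_re_sum_div {s : Finset ℕ} {b f : ℕ → ℂ} {c : ℂ}
    (h : 1 / 2 ≤ (∑ j ∈ s, b j / c * f j).re) : c ≠ 0 := by
  rintro rfl
  norm_num at h

theorem sum_Icc_eq_mul_sum_range_div {a : ℕ → ℂ} {k : ℕ → ℕ} {ν n : ℕ} (hν : ν ≤ n)
    (hk : MonotoneOn k (Set.Iic n)) (ha : a ν ≠ 0) (z : ℂ) :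
    ∑ μ ∈ Icc ν n, a μ * z ^ k μ
      = a ν * z ^ k ν * ∑ j ∈ range (n - ν + 1), a (j + ν) / a ν * z ^ (k (j + ν) - k ν) := by
  rw [mul_sum, ← Ico_add_one_right_eq_Icc, sum_Ico_eq_sum_range, Nat.sub_add_comm hν]
  refine sum_congr rfl fun j hj => ?_
  have hkj : k ν ≤ k (j + ν) :=
    hk (Set.mem_Iic.2 hν) (Set.mem_Iic.2 (by rw [mem_range] at hj; omega)) (by omega)
  rw [add_comm ν j, ← pow_mul_pow_sub z hkj]
  field_simp

theorem norm_sum_Icc_succ_le_of_half_le_re {a : ℕ → ℂ} {k : ℕ → ℕ} {ν n : ℕ} (hν : ν ≤ n)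
    (hk : MonotoneOn k (Set.Iic n)) {z : ℂ}
    (hcond : 1 / 2 ≤ (∑ j ∈ range (n - ν + 1), a (j + ν) / a ν * z ^ (k (j + ν) - k ν)).re) :
    ‖∑ μ ∈ Icc (ν + 1) n, a μ * z ^ k μ‖ ≤ ‖∑ μ ∈ Icc ν n, a μ * z ^ k μ‖ := by
  set Q := ∑ j ∈ range (n - ν + 1), a (j + ν) / a ν * z ^ (k (j + ν) - k ν)
  have hfactor : ∑ μ ∈ Icc ν n, a μ * z ^ k μ = a ν * z ^ k ν * Q :=
    sum_Icc_eq_mul_sum_range_div hν hk (ne_zero_of_half_le_re_sum_div hcond) z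
  have hsplit : ∑ μ ∈ Icc ν n, a μ * z ^ k μ
      = a ν * z ^ k ν + ∑ μ ∈ Icc (ν + 1) n, a μ * z ^ k μ := by
    rw [← insert_Icc_add_one_left_eq_Icc hν, sum_insert (by simp)]
  have htail : ∑ μ ∈ Icc (ν + 1) n, a μ * z ^ k μ = a ν * z ^ k ν * (Q - 1) := by
    linear_combination hfactor - hsplit
  rw [htail, hfactor, norm_mul _ (Q - 1), norm_mul _ Q]
  exact mul_le_mul_of_nonneg_left (Complex.norm_sub_one_le_norm_of_half_le_re hcond)
    (norm_nonneg _)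

theorem stmt14_general (n : ℕ) (k : ℕ → ℕ) (hk : ∀ ν < n, k ν < k (ν + 1))
    (a : ℕ → ℂ)
    (hcond : ∀ ν ≤ n, ∀ t : ℂ, ‖t‖ ≤ 1 →
      1 / 2 ≤ (∑ j ∈ Finset.range (n - ν + 1), (a (j + ν) / a ν) * t ^ (k (j + ν) - k ν)).re)
    (z : ℂ) (hz : ‖z‖ ≤ 1) :
    (∀ ν < n, ‖∑ μ ∈ Finset.Icc (ν + 1) n, a μ * z ^ k μ‖
        ≤ ‖∑ μ ∈ Finset.Icc ν n, a μ * z ^ k μ‖)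
    ∧ ‖∑ μ ∈ Finset.Icc 0 n, a μ * z ^ k μ‖ ≤ ‖∑ ν ∈ Finset.range (n + 1), a ν * z ^ k ν‖
    ∧ ∑ μ ∈ Finset.Icc n n, a μ * z ^ k μ = a n * z ^ k n := by
  have hmono : MonotoneOn k (Set.Iic n) :=
    (strictMonoOn_Iic_of_lt_succ fun m hm => by simpa using hk m hm).monotoneOn
  refine ⟨fun ν hν => norm_sum_Icc_succ_le_of_half_le_re hν.le hmono (hcond ν hν.le z hz),
    ?_, by simp⟩
  rw [← Ico_add_one_right_eq_Icc, Nat.Ico_zero_eq_range]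

/-- Under the main condition (1.12), the moduli of the tails
`ρ_{k_ν}(P)(z) = ∑_{μ=ν}^n a_μ z^{k_μ}` form a non-increasing chain on the closed unit
disk, starting at `|P(z)|` and ending at `|a_n z^{k_n}|`. -/
theorem stmt14 (n : ℕ) (k : ℕ → ℕ) (hk : ∀ ν < n, k ν < k (ν + 1))
    (a : ℕ → ℂ) (ha : ∀ ν ≤ n, a ν ≠ 0)
    (hcond : ∀ ν ≤ n, ∀ t : ℂ, ‖t‖ ≤ 1 →
      1 / 2 ≤ (∑ j ∈ Finset.range (n - ν + 1), (a (j + ν) / a ν) * t ^ (k (j + ν) - k ν)).re)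
    (z : ℂ) (hz : ‖z‖ ≤ 1) :
    (∀ ν < n, ‖∑ μ ∈ Finset.Icc (ν + 1) n, a μ * z ^ k μ‖
        ≤ ‖∑ μ ∈ Finset.Icc ν n, a μ * z ^ k μ‖)
    ∧ ‖∑ μ ∈ Finset.Icc 0 n, a μ * z ^ k μ‖ ≤ ‖∑ ν ∈ Finset.range (n + 1), a ν * z ^ k ν‖
    ∧ ∑ μ ∈ Finset.Icc n n, a μ * z ^ k μ = a n * z ^ k n :=
  stmt14_general n k hk a hcond z hz
end

section
/- Let P(z) = ∑_{ν=0}^n a_ν z^{k_ν} with 0 ≤ k_0 < ... < k_n and nonzero coefficients satisfying the condition min_{|t| ≤ 1} Re ∑_{j=0}^{n-ν} (a_{j+ν}/a_ν) t^{k_{j+ν}-k_ν} ≥ 1/2 for every ν = 0,...,n. Then P has no zeros in the closed unit disk if k_0 = 0, and no zeros in the closed unit disk except possibly z = 0 if k_0 > 0. -/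
/-!
Since `k 0 ≤ k ν` for every `ν`, the polynomial factors as `P z = a 0 * z ^ k 0 * Q z` with
`Q z = ∑ ν, (a ν / a 0) * z ^ (k ν - k 0)`, and condition (1.12) for `ν = 0` says exactly that
`Re Q ≥ 1/2` on the closed unit disk. So in the disk `P` vanishes only where `z ^ k 0` does.
-/

open Finset

theorem sum_mul_pow_eq_mul_pow_mul_sum {R : Type*} [Field R] {N m : ℕ} {k : ℕ → ℕ}
    (hm : ∀ ν ∈ range N, m ≤ k ν) (a : ℕ → R) {c : R} (hc : c ≠ 0) (z : R) :
    ∑ ν ∈ range N, a ν * z ^ k ν = c * z ^ m * ∑ ν ∈ range N, a ν / c * z ^ (k ν - m) := by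
  rw [mul_sum]
  refine sum_congr rfl fun ν hν => ?_
  rw [← Nat.add_sub_cancel' (hm ν hν), pow_add, Nat.add_sub_cancel_left]
  field_simp

/-- Theorem 1.1(i): under condition (1.12), `P` has no zeros in the closed unit disk when
`k 0 = 0`, and no zeros there other than `0` when `k 0 > 0`. -/
theorem stmt15 (n : ℕ) (k : ℕ → ℕ) (hk : ∀ ν < n, k ν < k (ν + 1))
    (a : ℕ → ℂ) (ha : ∀ ν ≤ n, a ν ≠ 0)
    (hcond : ∀ ν ≤ n, ∀ t : ℂ, ‖t‖ ≤ 1 →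
      1 / 2 ≤ (∑ j ∈ Finset.range (n - ν + 1), (a (j + ν) / a ν) * t ^ (k (j + ν) - k ν)).re) :
    (k 0 = 0 → ∀ z : ℂ, ‖z‖ ≤ 1 → ∑ ν ∈ Finset.range (n + 1), a ν * z ^ k ν ≠ 0)
    ∧ (0 < k 0 → ∀ z : ℂ, ‖z‖ ≤ 1 → z ≠ 0 →
        ∑ ν ∈ Finset.range (n + 1), a ν * z ^ k ν ≠ 0) := by
  have hk_mono : MonotoneOn k (Set.Iic n) := (strictMonoOn_Iic_of_lt_succ hk).monotoneOn
  have ha0 : a 0 ≠ 0 := ha 0 n.zero_le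
  have hfactor (z : ℂ) := sum_mul_pow_eq_mul_pow_mul_sum (N := n + 1) (m := k 0)
    (fun ν hν => hk_mono (Set.mem_Iic.2 n.zero_le)
      (Set.mem_Iic.2 (Nat.lt_succ_iff.1 (mem_range.1 hν))) ν.zero_le) a ha0 z
  have hQ (z : ℂ) (hz : ‖z‖ ≤ 1) :
      ∑ ν ∈ range (n + 1), a ν / a 0 * z ^ (k ν - k 0) ≠ 0 := by
    intro hzero
    have hre := hcond 0 n.zero_le z hz
    simp only [Nat.sub_zero, Nat.add_zero, hzero, Complex.zero_re] at hre
    norm_num at hre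
  have hP (z : ℂ) (hz : ‖z‖ ≤ 1) (hzk : z ^ k 0 ≠ 0) :
      ∑ ν ∈ range (n + 1), a ν * z ^ k ν ≠ 0 := by
    rw [hfactor]
    exact mul_ne_zero (mul_ne_zero ha0 hzk) (hQ z hz)
  exact ⟨fun hk0 z hz => hP z hz (by simp [hk0]), fun _ z hz hz0 => hP z hz (pow_ne_zero _ hz0)⟩
end

section
/- Let P(z) = ∑_{ν=0}^n a_ν z^{k_ν} with k_0 = 0, n ≥ 1, 0 = k_0 < k_1 < ... < k_n, nonzero coefficients, satisfying min_{|t| ≤ 1} Re ∑_{j=0}^{n-ν} (a_{j+ν}/a_ν) t^{k_{j+ν}-k_ν} ≥ 1/2 for every ν. Then |P'(z)| < k_n |P(z)| for all z in the open unit disk. -/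
/-!
Write `T_ν(w) = ∑_{i ≥ ν} a_i w^{k_i}` for the tails of `P`, so `T_0 = P`. Condition (1.12) says
`T_ν = a_ν w^{k_ν} g_ν` with `Re g_ν ≥ 1/2` on the closed disk; then
`T_{ν+1} = a_ν w^{k_ν} (g_ν - 1)` and `|g_ν - 1| ≤ |g_ν|`, so `|T_ν| ≤ |P|` for all `ν`, and
`P ≠ 0` there. Abel summation gives `w P'(w) = ∑_ν (k_{ν+1} - k_ν) T_{ν+1}(w)`, hence
`|P'| ≤ k_n |P|` on the unit circle. By the maximum modulus principle for `P'/P` the inequality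
holds inside, and strictly, because `P' = c P` with `c ≠ 0` forces `P = 0`.
-/

open Polynomial Finset

theorem Complex.norm_sub_one_le_norm_of_half_le_re_s17 {g : ℂ} (hg : 1 / 2 ≤ g.re) :
    ‖g - 1‖ ≤ ‖g‖ := by
  rw [Complex.norm_def, Complex.norm_def]
  apply Real.sqrt_le_sqrt
  simp only [Complex.normSq_apply, Complex.sub_re, Complex.one_re, Complex.sub_im,
    Complex.one_im, sub_zero]
  nlinarith

theorem Finset.sum_mul_eq_mul_sum_add_sum_sub_mul_sum_Ico {R : Type*} [CommRing R]
    (c x : ℕ → R) (n : ℕ) :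
    ∑ ν ∈ range (n + 1), c ν * x ν = c 0 * ∑ ν ∈ range (n + 1), x ν +
      ∑ μ ∈ range n, (c (μ + 1) - c μ) * ∑ ν ∈ Ico (μ + 1) (n + 1), x ν := by
  have hc : ∀ ν, c ν = c 0 + ∑ μ ∈ range ν, (c (μ + 1) - c μ) := fun ν => by
    rw [sum_range_sub]; ring
  have hswap : ∑ ν ∈ range (n + 1), ∑ μ ∈ range ν, (c (μ + 1) - c μ) * x ν =
      ∑ μ ∈ range n, ∑ ν ∈ Ico (μ + 1) (n + 1), (c (μ + 1) - c μ) * x ν :=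
    sum_comm' fun ν μ => by simp only [mem_range, mem_Ico]; omega
  simp_rw [mul_sum, ← hswap, ← sum_mul, ← sum_add_distrib, ← add_mul, ← hc]

theorem Complex.norm_sum_Ico_succ_le {x : ℕ → ℂ} {ν m : ℕ} (hν : ν < m) {g : ℂ}
    (hg : 1 / 2 ≤ g.re) (h : ∑ i ∈ Ico ν m, x i = x ν * g) :
    ‖∑ i ∈ Ico (ν + 1) m, x i‖ ≤ ‖∑ i ∈ Ico ν m, x i‖ := by
  have hsucc : ∑ i ∈ Ico (ν + 1) m, x i = x ν * (g - 1) := by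
    rw [mul_sub, ← h, sum_eq_sum_Ico_succ_bot hν]; ring
  rw [hsucc, h, norm_mul, norm_mul]
  exact mul_le_mul_of_nonneg_left (norm_sub_one_le_norm_of_half_le_re_s17 hg) (norm_nonneg _)

theorem Complex.norm_sum_Ico_le_norm_sum_range {x : ℕ → ℂ} {m : ℕ}
    (h : ∀ ν < m, ∃ g : ℂ, 1 / 2 ≤ g.re ∧ ∑ i ∈ Ico ν m, x i = x ν * g) :
    ∀ ν ≤ m, ‖∑ i ∈ Ico ν m, x i‖ ≤ ‖∑ i ∈ range m, x i‖ := by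
  intro ν hν
  induction ν with
  | zero => rw [range_eq_Ico]
  | succ ν ih =>
    obtain ⟨g, hg, hfac⟩ := h ν hν
    exact (norm_sum_Ico_succ_le hν hg hfac).trans (ih (Nat.le_of_succ_le hν))

theorem Complex.norm_sum_mul_le {x : ℕ → ℂ} {c : ℕ → ℝ} {n : ℕ} (hc0 : c 0 = 0)
    (hc : ∀ μ < n, c μ ≤ c (μ + 1))
    (htail : ∀ ν ≤ n, ‖∑ i ∈ Ico ν (n + 1), x i‖ ≤ ‖∑ i ∈ range (n + 1), x i‖) :
    ‖∑ ν ∈ range (n + 1), (c ν : ℂ) * x ν‖ ≤ c n * ‖∑ ν ∈ range (n + 1), x ν‖ := by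
  rw [sum_mul_eq_mul_sum_add_sum_sub_mul_sum_Ico, hc0, ofReal_zero, zero_mul, zero_add]
  calc _ ≤ ∑ μ ∈ range n, ‖((c (μ + 1) : ℂ) - c μ) * ∑ ν ∈ Ico (μ + 1) (n + 1), x ν‖ :=
        norm_sum_le _ _
    _ ≤ ∑ μ ∈ range n, (c (μ + 1) - c μ) * ‖∑ ν ∈ range (n + 1), x ν‖ := by
        refine sum_le_sum fun μ hμ => ?_
        have hμ := mem_range.mp hμ
        rw [norm_mul, ← ofReal_sub, norm_real, Real.norm_of_nonneg (sub_nonneg.mpr (hc μ hμ))]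
        exact mul_le_mul_of_nonneg_left (htail (μ + 1) hμ) (sub_nonneg.mpr (hc μ hμ))
    _ = c n * ‖∑ ν ∈ range (n + 1), x ν‖ := by
        rw [← sum_mul, sum_range_sub, hc0, sub_zero]

theorem Polynomial.derivative_ne_C_mul_self {R : Type*} [Semiring R] [NoZeroDivisors R]
    {p : R[X]} (hp : p ≠ 0) {c : R} (hc : c ≠ 0) : derivative p ≠ C c * p := by
  intro h
  by_cases hdeg : p.natDegree = 0
  · rw [derivative_of_natDegree_zero hdeg, eq_comm, mul_eq_zero, C_eq_zero] at h
    tauto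
  · have := natDegree_derivative_lt hdeg
    rw [h, natDegree_C_mul hc] at this
    exact this.false

theorem Polynomial.mul_eval_derivative_C_mul_X_pow {R : Type*} [CommSemiring R] (a w : R)
    (m : ℕ) : w * (derivative (C a * X ^ m)).eval w = m * (a * w ^ m) := by
  cases m with
  | zero => simp
  | succ m => simp only [derivative_C_mul_X_pow, eval_mul, eval_C, eval_pow, eval_X]; push_cast; ring

open Metric in
theorem Polynomial.norm_derivative_eval_lt {P : ℂ[X]} {K : ℝ} (hK : 0 < K)
    (hP : ∀ w : ℂ, ‖w‖ ≤ 1 → P.eval w ≠ 0)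
    (hbd : ∀ w : ℂ, ‖w‖ = 1 → ‖P.derivative.eval w‖ ≤ K * ‖P.eval w‖)
    {z : ℂ} (hz : ‖z‖ < 1) : ‖P.derivative.eval z‖ < K * ‖P.eval z‖ := by
  set G : ℂ → ℂ := fun w => P.derivative.eval w / P.eval w
  have hdiff : DifferentiableOn ℂ G (closedBall 0 1) :=
    P.derivative.differentiable.differentiableOn.div P.differentiable.differentiableOn
      fun w hw => hP w (by simpa using hw)
  have hle : ∀ w ∈ closedBall (0 : ℂ) 1, ‖G w‖ ≤ K := by
    intro w hw
    rw [← closure_ball (0 : ℂ) one_ne_zero] at hw hdiff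
    refine Complex.norm_le_of_forall_mem_frontier_norm_le isBounded_ball hdiff.diffContOnCl
      (fun u hu => ?_) hw
    rw [frontier_ball (0 : ℂ) one_ne_zero, mem_sphere_zero_iff_norm] at hu
    rw [norm_div, div_le_iff₀ (norm_pos_iff.mpr (hP u hu.le))]
    exact hbd u hu
  by_contra! hge
  have hzball : z ∈ ball (0 : ℂ) 1 := mem_ball_zero_iff.mpr hz
  have hGz : ‖G z‖ = K := by
    refine le_antisymm (hle z (ball_subset_closedBall hzball)) ?_
    rw [norm_div, le_div_iff₀ (norm_pos_iff.mpr (hP z hz.le))]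
    exact hge
  have hconst := Complex.eq_const_of_exists_max (hdiff.mono ball_subset_closedBall) hzball
    fun w hw => by simpa [hGz] using hle w (ball_subset_closedBall hw)
  have hderiv : P.derivative = C (G z) * P := by
    refine eq_of_infinite_eval_eq _ _ ((infinite_of_mem_nhds 0 (ball_mem_nhds 0 one_pos)).mono
      fun w hw => ?_)
    have hPw := hP w (mem_closedBall_zero_iff.mp (ball_subset_closedBall hw))
    have := hconst hw
    simp only [G, Function.const_apply, div_eq_iff hPw] at this
    simpa [mul_comm] using this
  refine derivative_ne_C_mul_self (fun h => hP 0 (by simp) (by simp [h])) ?_ hderiv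
  rw [← norm_ne_zero_iff, hGz]
  exact hK.ne'

theorem sum_Ico_mul_pow_eq_mul_pow_mul {n : ℕ} {k : ℕ → ℕ} (hk : MonotoneOn k (Set.Iic n))
    {a : ℕ → ℂ} {ν : ℕ} (hν : ν ≤ n) (haν : a ν ≠ 0) (w : ℂ) :
    ∑ i ∈ Ico ν (n + 1), a i * w ^ k i =
      a ν * w ^ k ν * ∑ j ∈ range (n - ν + 1), (a (j + ν) / a ν) * w ^ (k (j + ν) - k ν) := by
  rw [sum_Ico_eq_sum_range, show n + 1 - ν = n - ν + 1 by omega, mul_sum]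
  refine sum_congr rfl fun j hj => ?_
  have hkj : k ν ≤ k (j + ν) :=
    hk (Set.mem_Iic.mpr hν) (Set.mem_Iic.mpr (by simp at hj; omega)) (by omega)
  rw [add_comm ν j, mul_mul_mul_comm, mul_div_cancel₀ _ haν, ← pow_add, Nat.add_sub_cancel' hkj]

/-- Theorem 1.1(iii): under condition (1.12) with `k 0 = 0` and `n ≥ 1`, the strict
inequality `|P'(z)| < k_n |P(z)|` holds in the open unit disk. -/
theorem stmt17 (n : ℕ) (hn : 1 ≤ n) (k : ℕ → ℕ) (hk0 : k 0 = 0)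
    (hk : ∀ ν < n, k ν < k (ν + 1))
    (a : ℕ → ℂ) (ha : ∀ ν ≤ n, a ν ≠ 0)
    (hcond : ∀ ν ≤ n, ∀ t : ℂ, ‖t‖ ≤ 1 →
      1 / 2 ≤ (∑ j ∈ Finset.range (n - ν + 1), (a (j + ν) / a ν) * t ^ (k (j + ν) - k ν)).re)
    (P : Polynomial ℂ) (hP : P = ∑ ν ∈ Finset.range (n + 1), C (a ν) * X ^ k ν)
    (z : ℂ) (hz : ‖z‖ < 1) :
    ‖P.derivative.eval z‖ < (k n : ℝ) * ‖P.eval z‖ := by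
  have hmono : StrictMonoOn k (Set.Iic n) := strictMonoOn_Iic_of_lt_succ hk
  have hfactor := fun ν (hν : ν ≤ n) =>
    sum_Ico_mul_pow_eq_mul_pow_mul hmono.monotoneOn hν (ha ν hν)
  have heval : ∀ w, P.eval w = ∑ ν ∈ range (n + 1), a ν * w ^ k ν := by
    simp [hP, eval_finsetSum]
  have hderiv : ∀ w,
      w * P.derivative.eval w = ∑ ν ∈ range (n + 1), (k ν : ℂ) * (a ν * w ^ k ν) := by
    simp only [hP, derivative_sum, eval_finsetSum, mul_sum, mul_eval_derivative_C_mul_X_pow,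
      implies_true]
  have hPne : ∀ w : ℂ, ‖w‖ ≤ 1 → P.eval w ≠ 0 := by
    intro w hw h0
    have hre := hcond 0 n.zero_le w hw
    rw [heval, range_eq_Ico, hfactor 0 n.zero_le] at h0
    rw [(mul_eq_zero.mp h0).resolve_left (mul_ne_zero (ha 0 n.zero_le) (by simp [hk0]))] at hre
    norm_num at hre
  have hbd : ∀ w : ℂ, ‖w‖ = 1 → ‖P.derivative.eval w‖ ≤ k n * ‖P.eval w‖ := by
    intro w hw
    have htail := Complex.norm_sum_Ico_le_norm_sum_range fun ν hν =>
      ⟨_, hcond ν (by omega) w hw.le, hfactor ν (by omega) w⟩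
    have hsum := Complex.norm_sum_mul_le (c := fun ν => (k ν : ℝ)) (by simp [hk0])
      (fun μ hμ => by exact_mod_cast (hk μ hμ).le) fun ν hν => htail ν (by omega)
    simp only [Complex.ofReal_natCast] at hsum
    rwa [← heval, ← hderiv, norm_mul, hw, one_mul] at hsum
  have hkn : 0 < (k n : ℝ) := by
    have := hmono (Set.mem_Iic.mpr n.zero_le) (Set.mem_Iic.mpr le_rfl) (by omega)
    rw [hk0] at this
    exact_mod_cast this
  exact P.norm_derivative_eval_lt hkn hPne hbd hz
end
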